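/- For every x ∈ X and every t ≥ 0 one has 0 ≤ f_0(x) − f_t(x) ≤ (1/2) ∫₀ᵗ ( |∂⁻ f_s|(x) + tilt(f)(x) )² ds; in particular |f_0(x) − f_t(x)| is bounded by the integral on the right-hand side. -/

import Mathlib

/-!
Setting: `(X, d)` is a complete length metric space, `f : X × X → ℝ` is lower
semicontinuous, bounded from below, and satisfies the reverse triangle inequality
`f(x,z) ≥ f(x,y) + f(y,z)`.  For `t > 0` set `F(t,x;y) := f(x,y) + d(x,y)²/(2t)`,
`f_t(x) := inf_y F(t,x;y)`, and `f_0(x) := f(x,x)`.  `D⁺_t(x)` (resp. `D⁻_t(x)`)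
is the largest (resp. smallest) value of `limsup_n d(x,y_n)` (resp. `liminf_n d(x,y_n)`)
among minimizing sequences `(y_n)` of `F(t,x;·)`.
-/

open Filter Topology Metric MeasureTheory
open scoped ENNReal NNReal

noncomputable section

/-- A metric space is a *length space* if the distance between any two points equals the
infimum of the lengths (total variations) of continuous curves joining them. -/
def IsLengthSpace (X : Type*) [MetricSpace X] : Prop :=
  ∀ x y : X,
    ENNReal.ofReal (dist x y) =
      ⨅ γ : { γ : ℝ → X // ContinuousOn γ (Set.Icc 0 1) ∧ γ 0 = x ∧ γ 1 = y },
        eVariationOn γ.1 (Set.Icc 0 1)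

variable {X : Type*} [MetricSpace X]

/-- `FH f t x y = f(x,y) + d(x,y)² / (2t)`. -/
def FH (f : X × X → ℝ) (t : ℝ) (x y : X) : ℝ :=
  f (x, y) + dist x y ^ 2 / (2 * t)

/-- `ft f t x = inf_y (f(x,y) + d(x,y)²/(2t))` for `t ≠ 0`, and `ft f 0 x = f(x,x)`. -/
def ft (f : X × X → ℝ) (t : ℝ) (x : X) : ℝ :=
  if t = 0 then f (x, x) else ⨅ y : X, FH f t x y

/-- `y : ℕ → X` is a minimizing sequence for `F(t,x;·)`. -/
def MinSeq (f : X × X → ℝ) (t : ℝ) (x : X) (y : ℕ → X) : Prop :=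
  Tendsto (fun n => FH f t x (y n)) atTop (𝓝 (ft f t x))

/-- `D⁺_t(x)`: the largest value of `limsup_n d(x, y_n)` among minimizing sequences. -/
def Dplus (f : X × X → ℝ) (t : ℝ) (x : X) : ℝ :=
  sSup { L : ℝ | ∃ y : ℕ → X, MinSeq f t x y ∧
    Filter.limsup (fun n => dist x (y n)) atTop = L }

/-- `D⁻_t(x)`: the smallest value of `liminf_n d(x, y_n)` among minimizing sequences. -/
def Dminus (f : X × X → ℝ) (t : ℝ) (x : X) : ℝ :=
  sInf { L : ℝ | ∃ y : ℕ → X, MinSeq f t x y ∧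
    Filter.liminf (fun n => dist x (y n)) atTop = L }

/-- Descending slope `|∂⁻ g|(x) = limsup_{y→x} (g(y) - g(x))⁻ / d(x,y)`, valued in `[0,∞]`. -/
def descSlope (g : X → ℝ) (x : X) : ℝ≥0∞ :=
  Filter.limsup (fun y => ENNReal.ofReal ((g x - g y) / dist x y)) (𝓝[≠] x)

/-- The tilt `tilt(f)(x) = limsup_{y→x} (f(x,y))⁻ / d(x,y)`, valued in `[0,∞]`. -/
def tilt (f : X × X → ℝ) (x : X) : ℝ≥0∞ :=
  Filter.limsup (fun y => ENNReal.ofReal ((-f (x, y)) / dist x y)) (𝓝[≠] x)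

/-!
Let `D(s)` be the smallest asymptotic distance from `x` of a minimizing sequence of `F(s,x;·)`.
Testing almost minimizers of `F(s,x;·)` against `F(t,x;·)` shows that `D` is nondecreasing and
that `f_s(x) - f_t(x) ≤ D(t)² (1/(2s) - 1/(2t))` for `s ≤ t`; Riemann sums over a fine partition
then give `f_σ(x) - f_t(x) ≤ ∫_σ^t D(s)²/(2s²) ds`, and lower semicontinuity of `f` lets `σ → 0`.
It remains to see `D(s)/s ≤ |∂⁻ f_s|(x) + tilt(f)(x)`: if `z` lies at distance `δ` from `x` on an
almost-geodesic towards an almost minimizer `y`, the reverse triangle inequality gives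
`f_s(x) - f_s(z) - f(x,z) ≥ (d(x,y)² - d(z,y)²)/(2s) - o(δ) ≈ δ D(s)/s`.
-/

open Set

lemma le_of_forall_pos_le_continuous {φ : ℝ → ℝ} {a : ℝ} (hφ : Continuous φ)
    (h : ∀ ε > 0, a ≤ φ ε) : a ≤ φ 0 :=
  ge_of_tendsto (hφ.continuousWithinAt (s := Ioi 0)) (eventually_nhdsWithin_of_forall h)

lemma frequently_nhdsNE_of_eventually_exists_dist_eq {x : X} {P : X → Prop}
    (h : ∀ᶠ δ in 𝓝[>] (0 : ℝ), ∃ z, dist x z = δ ∧ P z) : ∃ᶠ z in 𝓝[≠] x, P z := by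
  intro hev
  obtain ⟨r, hr, hball⟩ := Metric.eventually_nhds_iff.mp (eventually_nhdsWithin_iff.mp hev)
  obtain ⟨δ, ⟨z, hxz, hz⟩, hδ, hδr⟩ := (h.and (Ioo_mem_nhdsGT hr)).exists
  have hzx : z ≠ x := fun h => hδ.ne' (by rw [← hxz, h, dist_self])
  exact hball (by rwa [dist_comm, hxz]) hzx hz

lemma IsLengthSpace.exists_dist_eq_dist_le (hX : IsLengthSpace X) {x y : X} {δ η : ℝ}
    (hδ : 0 < δ) (hδd : δ < dist x y) (hη : 0 < η) :
    ∃ z, dist x z = δ ∧ dist z y ≤ dist x y - δ + η := by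
  have hlt : ENNReal.ofReal (dist x y) < ENNReal.ofReal (dist x y + η) :=
    (ENNReal.ofReal_lt_ofReal_iff (by positivity)).2 (lt_add_of_pos_right _ hη)
  rw [hX x y] at hlt
  obtain ⟨⟨γ, hγ, hγ0, hγ1⟩, hvar⟩ := iInf_lt_iff.mp hlt
  obtain ⟨c, hc, hxc⟩ := intermediate_value_Icc zero_le_one
    ((continuous_const.dist continuous_id).comp_continuousOn hγ)
    (show δ ∈ Icc (dist x (γ 0)) (dist x (γ 1)) by
      rw [hγ0, hγ1, dist_self]; exact ⟨hδ.le, hδd.le⟩)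
  have hsplit := eVariationOn.Icc_add_Icc γ hc.1 hc.2 hc (s := Icc (0 : ℝ) 1)
  rw [inter_eq_self_of_subset_right (Icc_subset_Icc le_rfl hc.2),
    inter_eq_self_of_subset_right (Icc_subset_Icc hc.1 le_rfl), inter_self] at hsplit
  have h₁ : ENNReal.ofReal δ ≤ eVariationOn γ (Icc 0 c) := by
    simpa [hγ0, edist_dist, ← hxc] using
      eVariationOn.edist_le γ (left_mem_Icc.mpr hc.1) (right_mem_Icc.mpr hc.1)
  have h₂ : ENNReal.ofReal (dist (γ c) y) ≤ eVariationOn γ (Icc c 1) := by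
    simpa [hγ1, edist_dist] using
      eVariationOn.edist_le γ (left_mem_Icc.mpr hc.2) (right_mem_Icc.mpr hc.2)
  have h₃ := (add_le_add h₁ h₂).trans_lt (hsplit ▸ hvar)
  rw [← ENNReal.ofReal_add hδ.le dist_nonneg,
    ENNReal.ofReal_lt_ofReal_iff_of_nonneg (by positivity)] at h₃
  exact ⟨γ c, hxc, by linarith⟩

lemma ofReal_le_descSlope_add_tilt {f : X × X → ℝ} {g : X → ℝ} {x : X} {b : ℝ}
    (h : ∃ᶠ z in 𝓝[≠] x, b ≤ (g x - g z + -f (x, z)) / dist x z) :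
    ENNReal.ofReal b ≤ descSlope g x + tilt f x := by
  refine ENNReal.le_of_forall_pos_le_add fun ε hε hfin => ?_
  have hε2 : (ε / 2 : ℝ≥0∞) ≠ 0 := by simpa using hε.ne'
  have h₁ : ∀ᶠ z in 𝓝[≠] x, ENNReal.ofReal ((g x - g z) / dist x z) < descSlope g x + ε / 2 :=
    eventually_lt_of_limsup_lt (ENNReal.lt_add_right (le_self_add.trans_lt hfin).ne hε2)
  have h₂ : ∀ᶠ z in 𝓝[≠] x, ENNReal.ofReal (-f (x, z) / dist x z) < tilt f x + ε / 2 :=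
    eventually_lt_of_limsup_lt (ENNReal.lt_add_right (le_add_self.trans_lt hfin).ne hε2)
  obtain ⟨z, hz, hz₁, hz₂⟩ := (h.and_eventually (h₁.and h₂)).exists
  calc ENNReal.ofReal b
      ≤ ENNReal.ofReal ((g x - g z) / dist x z + -f (x, z) / dist x z) :=
        ENNReal.ofReal_le_ofReal (by rwa [← add_div])
    _ ≤ ENNReal.ofReal ((g x - g z) / dist x z) + ENNReal.ofReal (-f (x, z) / dist x z) :=
        ENNReal.ofReal_add_le
    _ ≤ (descSlope g x + ε / 2) + (tilt f x + ε / 2) := add_le_add hz₁.le hz₂.le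
    _ = descSlope g x + tilt f x + ε := by rw [add_add_add_comm, ENNReal.add_halves]

lemma ft_zero (f : X × X → ℝ) (x : X) : ft f 0 x = f (x, x) := if_pos rfl

section Minimizers

variable {f : X × X → ℝ} {C s t ε : ℝ} {x : X}

lemma ft_eq_iInf (hs : 0 < s) (x : X) : ft f s x = ⨅ y, FH f s x y := if_neg hs.ne'

lemma bddBelow_range_FH (hC : ∀ p, C ≤ f p) (hs : 0 < s) (x : X) :
    BddBelow (range (FH f s x)) :=
  ⟨C, by rintro _ ⟨y, rfl⟩; exact le_add_of_le_of_nonneg (hC _) (by positivity)⟩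

lemma ft_le_FH (hC : ∀ p, C ≤ f p) (hs : 0 < s) (x y : X) : ft f s x ≤ FH f s x y := by
  rw [ft_eq_iInf hs]
  exact ciInf_le (bddBelow_range_FH hC hs x) y

lemma ft_le_ft_zero (hC : ∀ p, C ≤ f p) (hs : 0 < s) (x : X) : ft f s x ≤ ft f 0 x := by
  simpa [FH, ft_zero] using ft_le_FH hC hs x x

def minimizingFilter (f : X × X → ℝ) (s : ℝ) (x : X) : Filter X :=
  comap (FH f s x) (𝓝 (ft f s x))

lemma minimizingFilter_neBot (hC : ∀ p, C ≤ f p) (hs : 0 < s) (x : X) :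
    (minimizingFilter f s x).NeBot := by
  have : Nonempty X := ⟨x⟩
  have hmem := csInf_mem_closure (range_nonempty (FH f s x)) (bddBelow_range_FH hC hs x)
  rw [mem_closure_iff_frequently, ← comap_neBot_iff_frequently] at hmem
  rwa [minimizingFilter, ft_eq_iInf hs]

lemma eventually_FH_lt (hε : 0 < ε) :
    ∀ᶠ y in minimizingFilter f s x, FH f s x y < ft f s x + ε :=
  tendsto_comap.eventually_lt_const (lt_add_of_pos_right _ hε)

lemma eventually_dist_le (hC : ∀ p, C ≤ f p) (hs : 0 < s) :
    ∀ᶠ y in minimizingFilter f s x, dist x y ≤ 1 + 2 * s * (ft f s x + 1 - C) := by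
  filter_upwards [eventually_FH_lt one_pos] with y hy
  have hd : dist x y ^ 2 / (2 * s) < ft f s x + 1 - C := by
    have := hC (x, y)
    simp only [FH] at hy
    linarith
  rw [div_lt_iff₀ (by positivity)] at hd
  nlinarith [dist_nonneg (x := x) (y := y)]

/-- `D⁻_s(x)` of the paper, read along the filter of almost minimizers of `F(s,x;·)`. -/
def minimizerDist (f : X × X → ℝ) (s : ℝ) (x : X) : ℝ :=
  liminf (dist x) (minimizingFilter f s x)

lemma isCoboundedUnder_ge_dist (hC : ∀ p, C ≤ f p) (hs : 0 < s) :
    IsCoboundedUnder (· ≥ ·) (minimizingFilter f s x) (dist x) :=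
  have := minimizingFilter_neBot hC hs x
  isCoboundedUnder_ge_of_eventually_le _ (eventually_dist_le hC hs)

lemma minimizerDist_nonneg (hC : ∀ p, C ≤ f p) (hs : 0 < s) : 0 ≤ minimizerDist f s x :=
  le_liminf_of_le (isCoboundedUnder_ge_dist hC hs) (.of_forall fun _ => dist_nonneg)

lemma exists_FH_lt_dist_lt (hC : ∀ p, C ≤ f p) (hs : 0 < s) (hε : 0 < ε) :
    ∃ y, FH f s x y < ft f s x + ε ∧ dist x y < minimizerDist f s x + ε :=
  ((eventually_FH_lt hε).and_frequently <| frequently_lt_of_liminf_lt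
    (isCoboundedUnder_ge_dist hC hs) (lt_add_of_pos_right _ hε)).exists

lemma eventually_lt_dist {r : ℝ} (hr : r < minimizerDist f s x) :
    ∀ᶠ y in minimizingFilter f s x, r < dist x y :=
  eventually_lt_of_lt_liminf hr (isBoundedUnder_of_eventually_ge (.of_forall fun _ => dist_nonneg))

lemma dist_sq_sub_dist_sq_mul_le (hC : ∀ p, C ≤ f p) (hs : 0 < s) (ht : 0 < t) {y₁ y₂ : X}
    (h₁ : FH f s x y₁ ≤ ft f s x + ε) (h₂ : FH f t x y₂ ≤ ft f t x + ε) :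
    (dist x y₁ ^ 2 - dist x y₂ ^ 2) * (1 / (2 * s) - 1 / (2 * t)) ≤ 2 * ε := by
  have e₁ := ft_le_FH hC hs x y₂
  have e₂ := ft_le_FH hC ht x y₁
  simp only [FH] at h₁ h₂ e₁ e₂
  calc (dist x y₁ ^ 2 - dist x y₂ ^ 2) * (1 / (2 * s) - 1 / (2 * t))
      = (dist x y₁ ^ 2 / (2 * s) + dist x y₂ ^ 2 / (2 * t))
        - (dist x y₂ ^ 2 / (2 * s) + dist x y₁ ^ 2 / (2 * t)) := by ring
    _ ≤ 2 * ε := by linarith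

lemma ft_le_ft_add (hC : ∀ p, C ≤ f p) (hs : 0 < s) (hst : s ≤ t) (x : X) :
    ft f s x ≤ ft f t x + minimizerDist f t x ^ 2 * (1 / (2 * s) - 1 / (2 * t)) := by
  have ht := hs.trans_le hst
  have hc : 0 ≤ 1 / (2 * s) - 1 / (2 * t) :=
    sub_nonneg.2 (one_div_le_one_div_of_le (by positivity) (by linarith))
  have key : ∀ ε > 0, ft f s x ≤
      ft f t x + ε + (minimizerDist f t x + ε) ^ 2 * (1 / (2 * s) - 1 / (2 * t)) := by
    intro ε hε
    obtain ⟨y, hFy, hdy⟩ := exists_FH_lt_dist_lt hC ht hε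
    calc ft f s x ≤ FH f s x y := ft_le_FH hC hs x y
      _ = FH f t x y + dist x y ^ 2 * (1 / (2 * s) - 1 / (2 * t)) := by simp only [FH]; ring
      _ ≤ _ := by gcongr
  simpa using le_of_forall_pos_le_continuous (by fun_prop) key

lemma minimizerDist_le_of_lt (hC : ∀ p, C ≤ f p) (hs : 0 < s) (hst : s < t) :
    minimizerDist f s x ≤ minimizerDist f t x := by
  have ht := hs.trans hst
  set c := 1 / (2 * s) - 1 / (2 * t)
  have hc : 0 < c := sub_pos.2 (one_div_lt_one_div_of_lt (by positivity) (by linarith))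
  have key : ∀ ε > 0, minimizerDist f s x ≤
      ε + √((minimizerDist f t x + ε) ^ 2 + 2 * ε / c) := by
    intro ε hε
    have := minimizingFilter_neBot hC hs x
    obtain ⟨y₂, hF₂, hd₂⟩ := exists_FH_lt_dist_lt hC ht hε
    obtain ⟨y₁, hF₁, hd₁⟩ := ((eventually_FH_lt (f := f) (s := s) (x := x) hε).and
      (eventually_lt_dist (sub_lt_self _ hε))).exists
    have hcmp := dist_sq_sub_dist_sq_mul_le hC hs ht hF₁.le hF₂.le
    have hsq : dist x y₁ ^ 2 ≤ (minimizerDist f t x + ε) ^ 2 + 2 * ε / c := by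
      have := (le_div_iff₀ hc).2 hcmp
      have := pow_le_pow_left₀ dist_nonneg hd₂.le 2
      linarith
    linarith [Real.le_sqrt_of_sq_le hsq]
  simpa [Real.sqrt_sq (minimizerDist_nonneg hC ht)] using
    le_of_forall_pos_le_continuous (by fun_prop) key

lemma monotoneOn_minimizerDist (hC : ∀ p, C ≤ f p) (x : X) :
    MonotoneOn (fun s => minimizerDist f s x) (Ioi 0) := by
  intro s hs t _ hst
  rcases hst.eq_or_lt with rfl | hlt
  · rfl
  · exact minimizerDist_le_of_lt hC hs hlt

end Minimizers

section Slope

variable {f : X × X → ℝ} {C s ε : ℝ} {x : X}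

lemma tendsto_ft_nhdsGT_zero (hC : ∀ p, C ≤ f p) (hlsc : LowerSemicontinuous f) (x : X) :
    Tendsto (fun s => ft f s x) (𝓝[>] 0) (𝓝 (ft f 0 x)) := by
  refine tendsto_order.2 ⟨fun a ha => ?_, fun a ha => eventually_nhdsWithin_of_forall
    fun s hs => (ft_le_ft_zero hC hs x).trans_lt ha⟩
  rw [ft_zero] at ha
  obtain ⟨b, hab, hb⟩ := exists_between ha
  obtain ⟨r, hr, hball⟩ := Metric.eventually_nhds_iff.mp (hlsc (x, x) b hb)
  have hfC : 0 < f (x, x) - C + 1 := by linarith [hC (x, x)]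
  filter_upwards [Ioo_mem_nhdsGT (show 0 < r ^ 2 / (2 * (f (x, x) - C + 1)) by positivity)]
    with s ⟨hs, hsr⟩
  have : Nonempty X := ⟨x⟩
  refine hab.trans_le ((ft_eq_iInf hs x).symm ▸ le_ciInf fun y => ?_)
  rcases lt_or_ge (dist x y) r with hy | hy
  · have hby : b < f (x, y) := hball (by simpa [Prod.dist_eq, dist_comm] using hy)
    exact hby.le.trans (le_add_of_nonneg_right (by positivity))
  · -- far from `x` the quadratic penalty alone exceeds `f(x,x) - C`
    rw [lt_div_iff₀ (by positivity)] at hsr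
    have hpen : f (x, x) - C ≤ dist x y ^ 2 / (2 * s) := by
      rw [le_div_iff₀ (by positivity)]
      nlinarith [pow_le_pow_left₀ hr.le hy 2]
    have := hC (x, y)
    simp only [FH]
    linarith

lemma dist_sq_sub_le_ft_sub_ft (hC : ∀ p, C ≤ f p)
    (hrev : ∀ a b c : X, f (a, b) + f (b, c) ≤ f (a, c)) (hs : 0 < s) {y : X}
    (hy : FH f s x y ≤ ft f s x + ε) (z : X) :
    (dist x y ^ 2 - dist z y ^ 2) / (2 * s) - ε ≤ ft f s x - ft f s z - f (x, z) := by
  have h₁ := ft_le_FH hC hs z y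
  have h₂ := hrev x z y
  simp only [FH] at hy h₁
  rw [sub_div]
  linarith

lemma frequently_le_slope (hX : IsLengthSpace X) (hC : ∀ p, C ≤ f p)
    (hrev : ∀ a b c : X, f (a, b) + f (b, c) ≤ f (a, c)) (hs : 0 < s) {b : ℝ} (hb₀ : 0 ≤ b)
    (hb : b < minimizerDist f s x / s) :
    ∃ᶠ z in 𝓝[≠] x, b ≤ (ft f s x - ft f s z + -f (x, z)) / dist x z := by
  obtain ⟨D, hbD, hD⟩ := exists_between ((lt_div_iff₀ hs).mp hb)
  have hD₀ : 0 < D := (mul_nonneg hb₀ hs.le).trans_lt hbD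
  have hφ : Tendsto (fun δ => (1 - δ) * (2 * D - δ) / (2 * s) - δ) (𝓝[>] 0) (𝓝 (D / s)) := by
    convert ((by fun_prop : Continuous fun δ : ℝ => (1 - δ) * (2 * D - δ) / (2 * s) - δ).tendsto
      0).mono_left nhdsWithin_le_nhds using 2
    field_simp
    ring
  apply frequently_nhdsNE_of_eventually_exists_dist_eq
  filter_upwards [hφ.eventually_const_lt ((lt_div_iff₀ hs).mpr hbD),
    Ioo_mem_nhdsGT (lt_min one_pos hD₀)] with δ hδb ⟨hδ, hδD⟩
  have := minimizingFilter_neBot hC hs x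
  obtain ⟨y, hFy, hDy⟩ := ((eventually_FH_lt (f := f) (s := s) (x := x) (pow_pos hδ 2)).and
    (eventually_lt_dist hD)).exists
  have hδ1 : δ < 1 := hδD.trans_le (min_le_left _ _)
  obtain ⟨z, hxz, hzy⟩ :=
    hX.exists_dist_eq_dist_le hδ ((hδD.trans_le (min_le_right _ _)).trans hDy) (pow_pos hδ 2)
  refine ⟨z, hxz, ?_⟩
  have hzy_sq : dist z y ^ 2 ≤ (dist x y - δ + δ ^ 2) ^ 2 := pow_le_pow_left₀ dist_nonneg hzy 2
  have hgain : δ * (1 - δ) * (2 * D - δ) ≤ dist x y ^ 2 - (dist x y - δ + δ ^ 2) ^ 2 := by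
    nlinarith [mul_nonneg (mul_nonneg hδ.le (sub_nonneg.2 hδ1.le))
      (add_nonneg (sub_nonneg.2 hDy.le) (sq_nonneg δ))]
  rw [hxz, le_div_iff₀ hδ]
  calc b * δ ≤ ((1 - δ) * (2 * D - δ) / (2 * s) - δ) * δ :=
        mul_le_mul_of_nonneg_right hδb.le hδ.le
    _ = δ * (1 - δ) * (2 * D - δ) / (2 * s) - δ ^ 2 := by ring
    _ ≤ (dist x y ^ 2 - dist z y ^ 2) / (2 * s) - δ ^ 2 := by gcongr; linarith
    _ ≤ _ := by linarith [dist_sq_sub_le_ft_sub_ft hC hrev hs hFy.le z]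

lemma ofReal_minimizerDist_div_le (hX : IsLengthSpace X) (hC : ∀ p, C ≤ f p)
    (hrev : ∀ a b c : X, f (a, b) + f (b, c) ≤ f (a, c)) (hs : 0 < s) :
    ENNReal.ofReal (minimizerDist f s x / s) ≤ descSlope (fun z => ft f s z) x + tilt f x := by
  refine le_of_forall_lt_imp_le_of_dense fun c hc => ?_
  rw [← ENNReal.ofReal_toReal hc.ne_top]
  exact ofReal_le_descSlope_add_tilt (frequently_le_slope hX hC hrev hs ENNReal.toReal_nonneg
    ((ENNReal.lt_ofReal_iff_toReal_lt hc.ne_top).mp hc))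

end Slope

section RiemannSum

variable {g Φ w : ℝ → ℝ} {a b Δ : ℝ} {p : ℕ → ℝ} {n : ℕ}

lemma sum_setLIntegral_Ioc (hp : Monotone p) (h : ℝ → ℝ≥0∞) (n : ℕ) :
    ∑ i ∈ Finset.range n, ∫⁻ s in Ioc (p i) (p (i + 1)), h s = ∫⁻ s in Ioc (p 0) (p n), h s := by
  induction n with
  | zero => simp
  | succ n ih =>
    rw [Finset.sum_range_succ, ih, ← lintegral_union measurableSet_Ioc
      (Ioc_disjoint_Ioc_of_le le_rfl), Ioc_union_Ioc_eq_Ioc (hp n.zero_le) (hp n.le_succ)]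

lemma monotone_of_succ_eq_add (hΔ : 0 ≤ Δ) (hp : ∀ i, p (i + 1) = p i + Δ) : Monotone p :=
  monotone_nat_of_le_succ fun i => by rw [hp]; linarith

lemma mem_Icc_of_succ_eq_add (hΔ : 0 ≤ Δ) (hp : ∀ i, p (i + 1) = p i + Δ) (hp₀ : p 0 = a)
    (hpn : p n = b) {i : ℕ} (hi : i ≤ n) : p i ∈ Icc a b :=
  ⟨hp₀ ▸ monotone_of_succ_eq_add hΔ hp i.zero_le, hpn ▸ monotone_of_succ_eq_add hΔ hp hi⟩

/-- The gap between the upper and the lower Riemann sums of `Φ w` telescopes. -/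
lemma sub_le_sum_add (hΦ : MonotoneOn Φ (Icc a b)) (hw : AntitoneOn w (Icc a b))
    (hΦ₀ : 0 ≤ Φ a) (hw₀ : 0 ≤ w b) (hΔ : 0 ≤ Δ) (hp : ∀ i, p (i + 1) = p i + Δ)
    (hp₀ : p 0 = a) (hpn : p n = b)
    (hg : ∀ u ∈ Icc a b, ∀ v ∈ Icc a b, u ≤ v → g u - g v ≤ Φ v * w u * (v - u)) :
    g a - g b ≤ ∑ i ∈ Finset.range n, Φ (p i) * w (p (i + 1)) * Δ + 2 * Δ * Φ b * w a := by
  have hmem := fun i (hi : i ≤ n) => mem_Icc_of_succ_eq_add hΔ hp hp₀ hpn hi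
  have hab : a ≤ b := hp₀ ▸ hpn ▸ monotone_of_succ_eq_add hΔ hp n.zero_le
  have ha : a ∈ Icc a b := left_mem_Icc.2 hab
  have hb : b ∈ Icc a b := right_mem_Icc.2 hab
  have hstep : ∀ i ∈ Finset.range n, g (p i) - g (p (i + 1)) ≤ Φ (p i) * w (p (i + 1)) * Δ
      + Δ * (w a * (Φ (p (i + 1)) - Φ (p i)) + Φ b * (w (p i) - w (p (i + 1)))) := by
    intro i hi
    have hi := Finset.mem_range.1 hi
    have hu := hmem i hi.le
    have hv := hmem (i + 1) hi
    have huv : p i ≤ p (i + 1) := by rw [hp]; linarith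
    have hvu : p (i + 1) - p i = Δ := by rw [hp]; ring
    have hcross : Φ (p (i + 1)) * w (p i) ≤ Φ (p i) * w (p (i + 1))
        + (w a * (Φ (p (i + 1)) - Φ (p i)) + Φ b * (w (p i) - w (p (i + 1)))) := by
      nlinarith [mul_le_mul_of_nonneg_right (hw ha hu hu.1) (sub_nonneg.2 (hΦ hu hv huv)),
        mul_le_mul_of_nonneg_right (hΦ hu hb hu.2) (sub_nonneg.2 (hw hu hv huv))]
    calc g (p i) - g (p (i + 1)) ≤ Φ (p (i + 1)) * w (p i) * Δ := hvu ▸ hg _ hu _ hv huv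
      _ ≤ _ := by nlinarith [mul_le_mul_of_nonneg_right hcross hΔ]
  calc g a - g b = ∑ i ∈ Finset.range n, (g (p i) - g (p (i + 1))) := by
        rw [Finset.sum_range_sub', hp₀, hpn]
    _ ≤ _ := Finset.sum_le_sum hstep
    _ = ∑ i ∈ Finset.range n, Φ (p i) * w (p (i + 1)) * Δ
        + Δ * (w a * (Φ b - Φ a) + Φ b * (w a - w b)) := by
      rw [Finset.sum_add_distrib, ← Finset.mul_sum, Finset.sum_add_distrib, ← Finset.mul_sum,
        ← Finset.mul_sum, Finset.sum_range_sub (fun i => Φ (p i)),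
        Finset.sum_range_sub' (fun i => w (p i)), hp₀, hpn]
    _ ≤ _ := by
      nlinarith [mul_nonneg hΔ (mul_nonneg (hw₀.trans (hw ha hb hab)) hΦ₀),
        mul_nonneg hΔ (mul_nonneg (hΦ₀.trans (hΦ ha hb hab)) hw₀)]

lemma ofReal_sum_le_setLIntegral (hΦ : MonotoneOn Φ (Icc a b)) (hw : AntitoneOn w (Icc a b))
    (hΦ₀ : 0 ≤ Φ a) (hw₀ : 0 ≤ w b) (hΔ : 0 ≤ Δ) (hp : ∀ i, p (i + 1) = p i + Δ)
    (hp₀ : p 0 = a) (hpn : p n = b) :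
    ENNReal.ofReal (∑ i ∈ Finset.range n, Φ (p i) * w (p (i + 1)) * Δ) ≤
      ∫⁻ s in Ioc a b, ENNReal.ofReal (Φ s * w s) := by
  have hmem := fun i (hi : i ≤ n) => mem_Icc_of_succ_eq_add hΔ hp hp₀ hpn hi
  have hab : a ≤ b := hp₀ ▸ hpn ▸ monotone_of_succ_eq_add hΔ hp n.zero_le
  have hΦ' : ∀ u ∈ Icc a b, 0 ≤ Φ u := fun u hu => hΦ₀.trans (hΦ (left_mem_Icc.2 hab) hu hu.1)
  have hw' : ∀ u ∈ Icc a b, 0 ≤ w u := fun u hu => hw₀.trans (hw hu (right_mem_Icc.2 hab) hu.2)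
  have hnonneg : ∀ i ∈ Finset.range n, 0 ≤ Φ (p i) * w (p (i + 1)) := fun i hi =>
    mul_nonneg (hΦ' _ (hmem i (Finset.mem_range.1 hi).le)) (hw' _ (hmem _ (Finset.mem_range.1 hi)))
  rw [ENNReal.ofReal_sum_of_nonneg fun i hi => mul_nonneg (hnonneg i hi) hΔ, ← hp₀, ← hpn,
    ← sum_setLIntegral_Ioc (monotone_of_succ_eq_add hΔ hp)]
  refine Finset.sum_le_sum fun i hi => ?_
  have hu := hmem i (Finset.mem_range.1 hi).le
  have hv := hmem (i + 1) (Finset.mem_range.1 hi)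
  have hvu : p (i + 1) - p i = Δ := by rw [hp]; ring
  calc ENNReal.ofReal (Φ (p i) * w (p (i + 1)) * Δ)
      = ∫⁻ _ in Ioc (p i) (p (i + 1)), ENNReal.ofReal (Φ (p i) * w (p (i + 1))) := by
        rw [setLIntegral_const, Real.volume_Ioc, hvu, ← ENNReal.ofReal_mul (hnonneg i hi)]
    _ ≤ ∫⁻ s in Ioc (p i) (p (i + 1)), ENNReal.ofReal (Φ s * w s) := by
      refine setLIntegral_mono' measurableSet_Ioc fun s hs => ENNReal.ofReal_le_ofReal ?_
      have hs' : s ∈ Icc a b := ⟨hu.1.trans hs.1.le, hs.2.trans hv.2⟩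
      exact mul_le_mul (hΦ hu hs' hs.1.le) (hw hs' hv hs.2) (hw' _ hv) (hΦ' _ hs')

theorem ofReal_sub_le_setLIntegral (hab : a ≤ b) (hΦ : MonotoneOn Φ (Icc a b))
    (hw : AntitoneOn w (Icc a b)) (hΦ₀ : 0 ≤ Φ a) (hw₀ : 0 ≤ w b)
    (hg : ∀ u ∈ Icc a b, ∀ v ∈ Icc a b, u ≤ v → g u - g v ≤ Φ v * w u * (v - u)) :
    ENNReal.ofReal (g a - g b) ≤ ∫⁻ s in Ioc a b, ENNReal.ofReal (Φ s * w s) := by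
  refine ENNReal.le_of_forall_pos_le_add fun ε hε _ => ?_
  have hwa : 0 ≤ w a := hw₀.trans (hw (left_mem_Icc.2 hab) (right_mem_Icc.2 hab) hab)
  have hΦb : 0 ≤ Φ b := hΦ₀.trans (hΦ (left_mem_Icc.2 hab) (right_mem_Icc.2 hab) hab)
  obtain ⟨n, hn⟩ := exists_nat_gt (2 * (b - a) * Φ b * w a / ε)
  have hn₀ : (0 : ℝ) < n := lt_of_le_of_lt (by positivity) hn
  set Δ := (b - a) / n
  have hΔ : 0 ≤ Δ := by positivity
  set p : ℕ → ℝ := fun i => a + i * Δ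
  have hp : ∀ i, p (i + 1) = p i + Δ := fun i => by simp only [p]; push_cast; ring
  have hp₀ : p 0 = a := by simp [p]
  have hpn : p n = b := by simp only [p, Δ]; field_simp; ring
  have herr : 2 * Δ * Φ b * w a ≤ ε := by
    rw [div_lt_iff₀ (by exact_mod_cast hε)] at hn
    calc 2 * Δ * Φ b * w a = 2 * (b - a) * Φ b * w a / n := by ring
      _ ≤ ε := by rw [div_le_iff₀ hn₀]; linarith
  have hsum := sub_le_sum_add hΦ hw hΦ₀ hw₀ hΔ hp hp₀ hpn hg
  calc ENNReal.ofReal (g a - g b)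
      ≤ ENNReal.ofReal (∑ i ∈ Finset.range n, Φ (p i) * w (p (i + 1)) * Δ)
          + ENNReal.ofReal (2 * Δ * Φ b * w a) :=
        (ENNReal.ofReal_le_ofReal hsum).trans ENNReal.ofReal_add_le
    _ ≤ (∫⁻ s in Ioc a b, ENNReal.ofReal (Φ s * w s)) + ε := by
      gcongr
      · exact ofReal_sum_le_setLIntegral hΦ hw hΦ₀ hw₀ hΔ hp hp₀ hpn
      · exact (ENNReal.ofReal_le_ofReal herr).trans_eq ENNReal.ofReal_coe_nnreal

end RiemannSum

section Main

variable {f : X × X → ℝ} {C σ t : ℝ} {x : X}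

lemma ofReal_minimizerDist_sq_le (hX : IsLengthSpace X) (hC : ∀ p, C ≤ f p)
    (hrev : ∀ a b c : X, f (a, b) + f (b, c) ≤ f (a, c)) {s : ℝ} (hs : 0 < s) :
    ENNReal.ofReal (minimizerDist f s x ^ 2 / 2 * (1 / s ^ 2)) ≤
      1 / 2 * (descSlope (fun z => ft f s z) x + tilt f x) ^ 2 := by
  have hD := minimizerDist_nonneg (x := x) hC hs
  calc ENNReal.ofReal (minimizerDist f s x ^ 2 / 2 * (1 / s ^ 2))
      = ENNReal.ofReal 2⁻¹ * ENNReal.ofReal (minimizerDist f s x / s) ^ 2 := by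
        rw [← ENNReal.ofReal_pow (by positivity), ← ENNReal.ofReal_mul (by norm_num)]
        congr 1
        ring
    _ ≤ 1 / 2 * (descSlope (fun z => ft f s z) x + tilt f x) ^ 2 := by
        rw [ENNReal.ofReal_inv_of_pos two_pos, one_div, ENNReal.ofReal_ofNat]
        gcongr
        exact ofReal_minimizerDist_div_le hX hC hrev hs

lemma ofReal_ft_sub_ft_le (hX : IsLengthSpace X) (hC : ∀ p, C ≤ f p)
    (hrev : ∀ a b c : X, f (a, b) + f (b, c) ≤ f (a, c)) (hσ : 0 < σ) (hσt : σ ≤ t) :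
    ENNReal.ofReal (ft f σ x - ft f t x) ≤
      ∫⁻ s in Ioc σ t, 1 / 2 * (descSlope (fun z => ft f s z) x + tilt f x) ^ 2 := by
  have hpos : ∀ {s}, s ∈ Icc σ t → 0 < s := fun hs => hσ.trans_le hs.1
  have hΦ : MonotoneOn (fun s => minimizerDist f s x ^ 2 / 2) (Icc σ t) := fun u hu v hv huv => by
    have := monotoneOn_minimizerDist hC x (hpos hu) (hpos hv) huv
    have := minimizerDist_nonneg (x := x) hC (hpos hu)
    dsimp only
    gcongr
  have hw : AntitoneOn (fun s : ℝ => 1 / s ^ 2) (Icc σ t) := fun u hu v _ huv =>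
    one_div_le_one_div_of_le (by have := hpos hu; positivity) (by gcongr; exact (hpos hu).le)
  have hg : ∀ u ∈ Icc σ t, ∀ v ∈ Icc σ t, u ≤ v → ft f u x - ft f v x ≤
      minimizerDist f v x ^ 2 / 2 * (1 / u ^ 2) * (v - u) := by
    intro u hu v hv huv
    have hu₀ := hpos hu
    have hv₀ := hpos hv
    have hk : 1 / (2 * u) - 1 / (2 * v) ≤ 1 / 2 * (1 / u ^ 2) * (v - u) := by
      rw [div_sub_div _ _ (by positivity : 2 * u ≠ 0) (by positivity : 2 * v ≠ 0),
        div_le_iff₀ (by positivity)]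
      field_simp
      nlinarith
    have := mul_le_mul_of_nonneg_left hk (sq_nonneg (minimizerDist f v x))
    have := ft_le_ft_add hC hu₀ huv x
    linarith
  calc ENNReal.ofReal (ft f σ x - ft f t x)
      ≤ ∫⁻ s in Ioc σ t, ENNReal.ofReal (minimizerDist f s x ^ 2 / 2 * (1 / s ^ 2)) :=
        ofReal_sub_le_setLIntegral hσt hΦ hw (by positivity) (by positivity) hg
    _ ≤ _ := setLIntegral_mono' measurableSet_Ioc fun s hs =>
        ofReal_minimizerDist_sq_le hX hC hrev (hσ.trans hs.1)

theorem ofReal_ft_zero_sub_ft_le (hX : IsLengthSpace X) (hlsc : LowerSemicontinuous f)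
    (hC : ∀ p, C ≤ f p) (hrev : ∀ a b c : X, f (a, b) + f (b, c) ≤ f (a, c)) (ht : 0 < t) :
    ENNReal.ofReal (ft f 0 x - ft f t x) ≤
      1 / 2 * ∫⁻ s in Ioc 0 t, (descSlope (fun z => ft f s z) x + tilt f x) ^ 2 := by
  rw [← lintegral_const_mul' _ _ (by simp)]
  refine le_of_tendsto ((ENNReal.continuous_ofReal.tendsto _).comp
    ((tendsto_ft_nhdsGT_zero hC hlsc x).sub_const _)) ?_
  filter_upwards [Ioo_mem_nhdsGT ht] with σ hσ
  exact (ofReal_ft_sub_ft_le hX hC hrev hσ.1 hσ.2.le).trans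
    (lintegral_mono_set (Ioc_subset_Ioc_left hσ.1.le))

end Main

theorem statement4_general (hX : IsLengthSpace X)
    (f : X × X → ℝ) (hlsc : LowerSemicontinuous f)
    (hbdd : ∃ C : ℝ, ∀ p : X × X, C ≤ f p)
    (hrev : ∀ x y z : X, f (x, y) + f (y, z) ≤ f (x, z))
    (x : X) (t : ℝ) (ht : 0 ≤ t) :
    ft f t x ≤ ft f 0 x ∧
    ENNReal.ofReal (ft f 0 x - ft f t x) ≤
      (1 / 2 : ℝ≥0∞) * ∫⁻ s in Set.Ioc (0 : ℝ) t,
        (descSlope (fun z => ft f s z) x + tilt f x) ^ 2 ∧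
    ENNReal.ofReal |ft f 0 x - ft f t x| ≤
      (1 / 2 : ℝ≥0∞) * ∫⁻ s in Set.Ioc (0 : ℝ) t,
        (descSlope (fun z => ft f s z) x + tilt f x) ^ 2 := by
  obtain ⟨C, hC⟩ := hbdd
  rcases ht.eq_or_lt with rfl | ht
  · simp
  have hmono : ft f t x ≤ ft f 0 x := ft_le_ft_zero hC ht x
  have hbound := ofReal_ft_zero_sub_ft_le (x := x) hX hlsc hC hrev ht
  exact ⟨hmono, hbound, by rwa [abs_of_nonneg (sub_nonneg.2 hmono)]⟩

/-- For every `x ∈ X` and `t ≥ 0`: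
`0 ≤ f_0(x) - f_t(x) ≤ (1/2) ∫₀ᵗ (|∂⁻ f_s|(x) + tilt(f)(x))² ds`; in particular
`|f_0(x) - f_t(x)|` is bounded by the right-hand side. -/
theorem statement4 [CompleteSpace X] (hX : IsLengthSpace X)
    (f : X × X → ℝ) (hlsc : LowerSemicontinuous f)
    (hbdd : ∃ C : ℝ, ∀ p : X × X, C ≤ f p)
    (hrev : ∀ x y z : X, f (x, y) + f (y, z) ≤ f (x, z))
    (x : X) (t : ℝ) (ht : 0 ≤ t) :
    ft f t x ≤ ft f 0 x ∧
    ENNReal.ofReal (ft f 0 x - ft f t x) ≤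
      (1 / 2 : ℝ≥0∞) * ∫⁻ s in Set.Ioc (0 : ℝ) t,
        (descSlope (fun z => ft f s z) x + tilt f x) ^ 2 ∧
    ENNReal.ofReal |ft f 0 x - ft f t x| ≤
      (1 / 2 : ℝ≥0∞) * ∫⁻ s in Set.Ioc (0 : ℝ) t,
        (descSlope (fun z => ft f s z) x + tilt f x) ^ 2 :=
  statement4_general hX f hlsc hbdd hrev x t ht
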